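/- Consider n buyers with budgets b_i ≥ 0 and values v_{i,j} ≥ 0 for m datasets. For any price vector p̂ ∈ ℝ≥0^m, there exists a clearable price vector p* ∈ ℝ≥0^m such that p*_j ≤ p̂_j for every dataset j ∈ [m] and r_i(p*) ≥ r_i(p̂) for every buyer i ∈ [n], where r_i(p) = min(b_i, Σ_{j ∈ [m] : v_{i,j} ≥ p_j} p_j). -/

import Mathlib

/-! Among the price vectors in the box `[0, p̂]` whose revenues dominate those of `p̂`, which form
a compact set because revenue is upper semicontinuous in the prices when values are nonnegative,
pick one of minimal total price. If some dataset `j` with `p j > 0` had no satisfied interested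
buyer, every interested buyer would already pay its full budget with room to spare, so `p j` could
be lowered to the largest shortfall `b i - (desire without j)` (or to `0`) without lowering any
revenue, contradicting minimality. -/

noncomputable section

/-- Buyer `i`'s desire at prices `p`: `d_i(p) = ∑_{j : v i j ≥ p j} p j`. -/
def desire {n m : ℕ} (v : Fin n → Fin m → ℝ) (p : Fin m → ℝ) (i : Fin n) : ℝ :=
  ∑ j ∈ Finset.univ.filter (fun j => p j ≤ v i j), p j

/-- The revenue collected from buyer `i` at prices `p`: `r_i(p) = min (b i) (d_i(p))`. -/
def buyerRev {n m : ℕ} (b : Fin n → ℝ) (v : Fin n → Fin m → ℝ)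
    (p : Fin m → ℝ) (i : Fin n) : ℝ :=
  min (b i) (desire v p i)

/-- A price vector `p` is clearable if for every dataset `j`, either `p j = 0` or
there is a satisfied buyer `i` (i.e. `d_i(p) ≤ b i`) with `v i j ≥ p j`. -/
def Clearable {n m : ℕ} (b : Fin n → ℝ) (v : Fin n → Fin m → ℝ)
    (p : Fin m → ℝ) : Prop :=
  ∀ j : Fin m, p j = 0 ∨ ∃ i : Fin n, desire v p i ≤ b i ∧ p j ≤ v i j

open Function

lemma Finset.exists_nonneg_lt_forall_le {s : Finset ℝ} {a : ℝ} (ha : 0 < a)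
    (hs : ∀ x ∈ s, x < a) : ∃ t, 0 ≤ t ∧ t < a ∧ ∀ x ∈ s, x ≤ t := by
  classical
  set s' := insert 0 s
  have hne : s'.Nonempty := Finset.insert_nonempty 0 s
  refine ⟨s'.max' hne, s'.le_max' 0 (Finset.mem_insert_self 0 s), ?_,
    fun x hx => s'.le_max' x (Finset.mem_insert_of_mem hx)⟩
  rcases Finset.mem_insert.1 (s'.max'_mem hne) with h | h
  · exact h ▸ ha
  · exact hs _ h

section

variable {n m : ℕ}

lemma desire_update (v : Fin n → Fin m → ℝ) (p : Fin m → ℝ) (j : Fin m) (t : ℝ) (i : Fin n) :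
    desire v (update p j t) i = desire v (update p j 0) i + if t ≤ v i j then t else 0 := by
  classical
  simp only [desire, Finset.sum_filter]
  rw [Fintype.sum_eq_add_sum_compl j, Fintype.sum_eq_add_sum_compl j]
  have hrest : ∀ s : ℝ, ∑ k ∈ {j}ᶜ, (if update p j s k ≤ v i k then update p j s k else 0) =
      ∑ k ∈ {j}ᶜ, if p k ≤ v i k then p k else 0 :=
    fun s => Finset.sum_congr rfl fun k hk => by
      rw [update_of_ne (by simpa using hk)]
  simp only [hrest, update_self]
  split_ifs <;> ring

lemma desire_eq_desire_update_zero_add (v : Fin n → Fin m → ℝ) (p : Fin m → ℝ) (j : Fin m)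
    (i : Fin n) :
    desire v p i = desire v (update p j 0) i + if p j ≤ v i j then p j else 0 := by
  simpa using desire_update v p j (p j) i

lemma exists_lt_buyerRev_le_update (b : Fin n → ℝ) (v : Fin n → Fin m → ℝ) (p : Fin m → ℝ)
    {j : Fin m} (hpj : 0 < p j) (hunsat : ∀ i, p j ≤ v i j → b i < desire v p i) :
    ∃ t, 0 ≤ t ∧ t < p j ∧ ∀ i, buyerRev b v p i ≤ buyerRev b v (update p j t) i := by
  classical
  set rest := fun i => desire v (update p j 0) i
  have hgap : ∀ i, p j ≤ v i j → b i - rest i < p j := fun i hi => by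
    have := hunsat i hi
    rw [desire_eq_desire_update_zero_add v p j, if_pos hi] at this
    linarith
  obtain ⟨t, ht0, htp, hbt⟩ := Finset.exists_nonneg_lt_forall_le hpj
    (s := (Finset.univ.filter fun i => p j ≤ v i j).image fun i => b i - rest i)
    (by simpa using hgap)
  refine ⟨t, ht0, htp, fun i => ?_⟩
  simp only [buyerRev]
  rw [desire_update, desire_eq_desire_update_zero_add v p j]
  by_cases hi : p j ≤ v i j
  · have hbi : b i ≤ rest i + t := by
      linarith [hbt _ (Finset.mem_image_of_mem _ (Finset.mem_filter.2 ⟨Finset.mem_univ i, hi⟩))]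
    rw [if_pos (htp.le.trans hi)]
    exact (min_le_left _ _).trans (le_min le_rfl hbi)
  · rw [if_neg hi]
    gcongr
    split_ifs <;> linarith

lemma upperSemicontinuous_desire (v : Fin n → Fin m → ℝ) {i : Fin n} (hv : ∀ j, 0 ≤ v i j) :
    UpperSemicontinuous fun p => desire v p i := by
  classical
  simp only [desire, Finset.sum_filter]
  refine upperSemicontinuous_sum fun j _ => ?_
  have hterm : (fun p : Fin m → ℝ => if p j ≤ v i j then p j else 0) =
      fun p => min (p j) ({p | p j ≤ v i j}.indicator (fun _ => v i j) p) := by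
    funext p
    by_cases h : p j ≤ v i j
    · simp [h]
    · simp [h, (hv j).trans (not_le.1 h).le]
  rw [hterm]
  exact (continuous_apply j).upperSemicontinuous.inf
    ((isClosed_le (continuous_apply j) continuous_const).upperSemicontinuous_indicator (hv j))

lemma upperSemicontinuous_buyerRev (b : Fin n → ℝ) (v : Fin n → Fin m → ℝ) {i : Fin n}
    (hv : ∀ j, 0 ≤ v i j) : UpperSemicontinuous fun p => buyerRev b v p i :=
  continuous_const.upperSemicontinuous.inf (upperSemicontinuous_desire v hv)

def revenueDominating (b : Fin n → ℝ) (v : Fin n → Fin m → ℝ) (phat : Fin m → ℝ) :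
    Set (Fin m → ℝ) :=
  Set.Icc 0 phat ∩ ⋂ i, {p | buyerRev b v phat i ≤ buyerRev b v p i}

lemma isCompact_revenueDominating (b : Fin n → ℝ) {v : Fin n → Fin m → ℝ}
    (hv : ∀ i j, 0 ≤ v i j) (phat : Fin m → ℝ) : IsCompact (revenueDominating b v phat) :=
  isCompact_Icc.inter_right <| isClosed_iInter fun i =>
    (upperSemicontinuous_buyerRev b v (hv i)).isClosed_preimage _

lemma clearable_of_isMinOn_sum {b : Fin n → ℝ} {v : Fin n → Fin m → ℝ} {phat p : Fin m → ℝ}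
    (hp : p ∈ revenueDominating b v phat)
    (hmin : IsMinOn (fun q => ∑ j, q j) (revenueDominating b v phat) p) :
    Clearable b v p := by
  obtain ⟨⟨hp0, hphat⟩, hrev⟩ := hp
  intro j
  by_contra! hbad
  obtain ⟨hj0, hunsat⟩ := hbad
  obtain ⟨t, ht0, htp, hrev_t⟩ := exists_lt_buyerRev_le_update b v p
    ((hp0 j).lt_of_ne' hj0) fun i hi => not_le.1 fun h => (hunsat i h).not_ge hi
  have hmem : update p j t ∈ revenueDominating b v phat := by
    refine ⟨⟨le_update_iff.2 ⟨ht0, fun k _ => hp0 k⟩,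
      update_le_iff.2 ⟨htp.le.trans (hphat j), fun k _ => hphat k⟩⟩, ?_⟩
    exact Set.mem_iInter.2 fun i => (Set.mem_iInter.1 hrev i).trans (hrev_t i)
  exact (hmin hmem).not_gt (Fintype.sum_strictMono (update_lt_self_iff.2 htp))

end

theorem stmt18_general (n m : ℕ) (b : Fin n → ℝ)
    (v : Fin n → Fin m → ℝ) (hv : ∀ i j, 0 ≤ v i j)
    (phat : Fin m → ℝ) (hphat : ∀ j, 0 ≤ phat j) :
    ∃ pstar : Fin m → ℝ, (∀ j, 0 ≤ pstar j) ∧ Clearable b v pstar ∧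
      (∀ j, pstar j ≤ phat j) ∧
      ∀ i, buyerRev b v pstar i ≥ buyerRev b v phat i := by
  have hphat_mem : phat ∈ revenueDominating b v phat := ⟨⟨hphat, le_rfl⟩, by simp⟩
  obtain ⟨p, hp, hmin⟩ := (isCompact_revenueDominating b hv phat).exists_isMinOn
    ⟨phat, hphat_mem⟩ (continuous_finsetSum _ fun j _ => continuous_apply j).continuousOn
  exact ⟨p, hp.1.1, clearable_of_isMinOn_sum hp hmin, hp.1.2, Set.mem_iInter.1 hp.2⟩

/-- For any price vector `p̂ ≥ 0` there is a clearable price vector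
`p* ≥ 0` with `p*_j ≤ p̂_j` for every dataset `j` and `r_i(p*) ≥ r_i(p̂)` for every
buyer `i`. -/
theorem stmt18 (n m : ℕ) (b : Fin n → ℝ) (hb : ∀ i, 0 ≤ b i)
    (v : Fin n → Fin m → ℝ) (hv : ∀ i j, 0 ≤ v i j)
    (phat : Fin m → ℝ) (hphat : ∀ j, 0 ≤ phat j) :
    ∃ pstar : Fin m → ℝ, (∀ j, 0 ≤ pstar j) ∧ Clearable b v pstar ∧
      (∀ j, pstar j ≤ phat j) ∧
      ∀ i, buyerRev b v pstar i ≥ buyerRev b v phat i :=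
  stmt18_general n m b v hv phat hphat

end
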